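/- The encoding of intersection types into session types is injective on strict types: if ⟦σ⟧ = ⟦τ⟧ as session types, then σ = τ as strict types. -/

import Mathlib

mutual
/-- Strict types: σ, τ ::= unit | (π, η) → σ. -/
inductive StrictType : Type where
  | unit : StrictType
  | arrow : MultisetType → ListType → StrictType → StrictType

/-- Multiset types: π ::= ω | σ ∧ π (non-idempotent intersection). -/
inductive MultisetType : Type where
  | omega : MultisetType
  | inter : StrictType → MultisetType → MultisetType

/-- List types: nonempty lists of strict types, η ::= σ | σ ⋄ η. -/
inductive ListType : Type where
  | single : StrictType → ListType
  | lcons : StrictType → ListType → ListType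
end

/-- The underlying list of strict types of a list type. -/
def ListType.toList : ListType → List StrictType
  | .single σ => [σ]
  | .lcons σ η => σ :: η.toList

/-- ηᵢ: the i-th strict type of the list type η (1-indexed). -/
def getL (η : ListType) (i : Nat) : Option StrictType := η.toList[i - 1]?

/-- Concatenation ε ⋄ η of list types. -/
def lconcat : ListType → ListType → ListType
  | .single σ, η => .lcons σ η
  | .lcons σ ε, η => .lcons σ (lconcat ε η)

/-- η ∝ ε: η is an initial sublist (prefix) of ε. -/
def lpre (η ε : ListType) : Prop := η.toList <+: ε.toList

/-- σ^k: the multiset type σ ∧ ⋯ ∧ σ (k copies), with σ^0 = ω. -/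
def mpow (σ : StrictType) : Nat → MultisetType
  | 0 => .omega
  | k + 1 => .inter σ (mpow σ k)

/-- Session types of sπ (branching/selection given by lists of branches,
the i-th branch carrying label lᵢ). -/
inductive SessionType : Type where
  | one : SessionType
  | bot : SessionType
  | tensor : SessionType → SessionType → SessionType
  | parr : SessionType → SessionType → SessionType
  | withBr : List SessionType → SessionType
  | oplusBr : List SessionType → SessionType
  | bang : SessionType → SessionType
  | quest : SessionType → SessionType
  | ndWith : SessionType → SessionType
  | ndOplus : SessionType → SessionType

mutual
/-- Duality on session types. -/
def SessionType.dual : SessionType → SessionType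
  | .one => .bot
  | .bot => .one
  | .tensor A B => .parr A.dual B.dual
  | .parr A B => .tensor A.dual B.dual
  | .withBr bs => .oplusBr (dualList bs)
  | .oplusBr bs => .withBr (dualList bs)
  | .bang A => .quest A.dual
  | .quest A => .bang A.dual
  | .ndWith A => .ndOplus A.dual
  | .ndOplus A => .ndWith A.dual
def dualList : List SessionType → List SessionType
  | [] => []
  | A :: rest => A.dual :: dualList rest
end

mutual
/-- Encoding of strict types into session types:
⟦unit⟧ = & 1 and ⟦(π, η) → τ⟧ = &( dual(⟦(π,η)⟧) ⅋ ⟦τ⟧ ),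
where ⟦(π,η)⟧ = ⊕( ⟦π⟧ ⊗ ((!⟦η⟧) ⊗ 1) ). -/
def encStrict : StrictType → SessionType
  | .unit => .ndWith .one
  | .arrow π η τ =>
      .ndWith (.parr
        (SessionType.dual
          (.ndOplus (.tensor (encMultZ π)
            (.tensor (.bang (.withBr (encListL η))) .one))))
        (encStrict τ))

/-- Encoding of multiset types into session types (with second parameter i = 0):
⟦σ ∧ π⟧ = ⊕((&1) ⅋ (⊕ & ((⊕⟦σ⟧) ⊗ ⟦π⟧))) and ⟦ω⟧ = ⊕((&1) ⅋ (⊕ & 1)). -/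
def encMultZ : MultisetType → SessionType
  | .omega => .ndOplus (.parr (.ndWith .one) (.ndOplus (.ndWith .one)))
  | .inter σ π =>
      .ndOplus (.parr (.ndWith .one)
        (.ndOplus (.ndWith (.tensor (.ndOplus (encStrict σ)) (encMultZ π)))))

/-- Encoding of a list type as the list of branches of ⟦η⟧ = &ᵢ{lᵢ : ⟦ηᵢ⟧}. -/
def encListL : ListType → List SessionType
  | .single σ => [encStrict σ]
  | .lcons σ η => encStrict σ :: encListL η
end

/-! The encoding sends each type former to a session type of a distinct shape that keeps all
of its components, the argument type sitting under a duality, which is an involution; so the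
components can be read back off the encoding by structural recursion. -/

mutual
theorem SessionType.dual_dual : ∀ A : SessionType, A.dual.dual = A
  | .one | .bot => rfl
  | .tensor A B | .parr A B => by simp only [SessionType.dual, A.dual_dual, B.dual_dual]
  | .withBr bs | .oplusBr bs => by simp only [SessionType.dual, dualList_dualList bs]
  | .bang A | .quest A | .ndWith A | .ndOplus A => by simp only [SessionType.dual, A.dual_dual]
theorem dualList_dualList : ∀ l : List SessionType, dualList (dualList l) = l
  | [] => rfl
  | A :: l => by simp only [dualList, A.dual_dual, dualList_dualList l]
end

theorem SessionType.dual_involutive : Function.Involutive SessionType.dual :=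
  SessionType.dual_dual

theorem encListL_ne_nil (η : ListType) : encListL η ≠ [] := by
  cases η <;> simp [encListL]

mutual
theorem encMultZ_injective : Function.Injective encMultZ
  | .omega, .omega, _ => rfl
  | .omega, .inter _ _, h | .inter _ _, .omega, h => by simp [encMultZ] at h
  | .inter σ₁ π₁, .inter σ₂ π₂, h => by
      simp only [encMultZ, SessionType.ndOplus.injEq, SessionType.parr.injEq,
        SessionType.ndWith.injEq, SessionType.tensor.injEq, true_and] at h
      rw [encStrict_injective σ₁ σ₂ h.1, encMultZ_injective h.2]
theorem encListL_injective : Function.Injective encListL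
  | .single _, .single _, h => by
      rw [encStrict_injective _ _ (List.singleton_injective h)]
  | .single _, .lcons _ ε, h => absurd (List.cons.inj h).2.symm (encListL_ne_nil ε)
  | .lcons _ η, .single _, h => absurd (List.cons.inj h).2 (encListL_ne_nil η)
  | .lcons σ₁ η₁, .lcons σ₂ η₂, h => by
      obtain ⟨hσ, hη⟩ := List.cons.inj h
      rw [encStrict_injective _ _ hσ, encListL_injective hη]
/-- The encoding of intersection types into session types is injective on strict
types: if ⟦σ⟧ = ⟦τ⟧ as session types, then σ = τ as strict types. -/
theorem encStrict_injective :
    ∀ σ τ : StrictType, encStrict σ = encStrict τ → σ = τ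
  | .unit, .unit, _ => rfl
  | .unit, .arrow _ _ _, h | .arrow _ _ _, .unit, h => by simp [encStrict] at h
  | .arrow π₁ η₁ τ₁, .arrow π₂ η₂ τ₂, h => by
      simp only [encStrict, SessionType.ndWith.injEq, SessionType.parr.injEq] at h
      obtain ⟨hdom, hcod⟩ := h
      simp only [SessionType.dual_involutive.injective.eq_iff, SessionType.ndOplus.injEq,
        SessionType.tensor.injEq, SessionType.bang.injEq, SessionType.withBr.injEq,
        and_true] at hdom
      rw [encMultZ_injective hdom.1, encListL_injective hdom.2,
        encStrict_injective τ₁ τ₂ hcod]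
end
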